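/- Let $A$ be a bialgebra, $\beta$ a unital 2-cocycle for $A$, and $\gamma$ a unital 2-cocycle for the twisted bialgebra $A^\beta$. Then the convolution product $\gamma * \beta$ is a unital 2-cocycle for $A$. -/

import Mathlib

open TensorProduct

variable {K A : Type*}

section Defs

variable [CommRing K] [Ring A] [Bialgebra K A]

/-- The comultiplication of the tensor product coalgebra `A ⊗ A`. -/
noncomputable def comul2 : (A ⊗[K] A) →ₗ[K] (A ⊗[K] A) ⊗[K] (A ⊗[K] A) :=
  (TensorProduct.tensorTensorTensorComm K A A A A).toLinearMap ∘ₗ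
    (TensorProduct.map Coalgebra.comul Coalgebra.comul)

/-- The counit of the tensor product coalgebra `A ⊗ A`. -/
noncomputable def counit2 : (A ⊗[K] A) →ₗ[K] K :=
  (TensorProduct.lid K K).toLinearMap ∘ₗ
    (TensorProduct.map Coalgebra.counit Coalgebra.counit)

/-- The comultiplication of the tensor product coalgebra `A ⊗ (A ⊗ A)`. -/
noncomputable def comul3 : (A ⊗[K] (A ⊗[K] A)) →ₗ[K]
    (A ⊗[K] (A ⊗[K] A)) ⊗[K] (A ⊗[K] (A ⊗[K] A)) :=
  (TensorProduct.tensorTensorTensorComm K A A (A ⊗[K] A) (A ⊗[K] A)).toLinearMap ∘ₗ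
    (TensorProduct.map Coalgebra.comul comul2)

/-- Convolution product on linear maps `A ⊗ A → K`. -/
noncomputable def conv2 (f g : (A ⊗[K] A) →ₗ[K] K) : (A ⊗[K] A) →ₗ[K] K :=
  (TensorProduct.lid K K).toLinearMap ∘ₗ (TensorProduct.map f g) ∘ₗ comul2

/-- Convolution product on linear maps `A ⊗ (A ⊗ A) → K`. -/
noncomputable def conv3 (f g : (A ⊗[K] (A ⊗[K] A)) →ₗ[K] K) :
    (A ⊗[K] (A ⊗[K] A)) →ₗ[K] K :=
  (TensorProduct.lid K K).toLinearMap ∘ₗ (TensorProduct.map f g) ∘ₗ comul3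

/-- Convolution product on linear maps `A ⊗ A → A`. -/
noncomputable def conv2A (f g : (A ⊗[K] A) →ₗ[K] A) : (A ⊗[K] A) →ₗ[K] A :=
  (LinearMap.mul' K A) ∘ₗ (TensorProduct.map f g) ∘ₗ comul2

/-- The 2-cocycle equation for `σ`, relative to a multiplication map `m : A ⊗ A → A`
(with the coalgebra structure of `A` fixed):
`σ(y₁ ⊗ z₁) σ(x ⊗ m(y₂ ⊗ z₂)) = σ(x₁ ⊗ y₁) σ(m(x₂ ⊗ y₂) ⊗ z)`, in convolution form. -/
noncomputable def IsCocycleEq (m : (A ⊗[K] A) →ₗ[K] A) (σ : (A ⊗[K] A) →ₗ[K] K) : Prop :=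
  conv3 ((TensorProduct.lid K K).toLinearMap ∘ₗ TensorProduct.map Coalgebra.counit σ)
      (σ ∘ₗ TensorProduct.map LinearMap.id m) =
    conv3 (((TensorProduct.lid K K).toLinearMap ∘ₗ TensorProduct.map σ Coalgebra.counit)
        ∘ₗ (TensorProduct.assoc K A A A).symm.toLinearMap)
      ((σ ∘ₗ TensorProduct.map m LinearMap.id) ∘ₗ
        (TensorProduct.assoc K A A A).symm.toLinearMap)

/-- The normalization condition `σ(x ⊗ 1) = σ(1 ⊗ x) = ε(x)`. -/
def IsUnital (σ : (A ⊗[K] A) →ₗ[K] K) : Prop :=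
  ∀ x : A, σ (x ⊗ₜ[K] (1 : A)) = Coalgebra.counit (R := K) x ∧
    σ ((1 : A) ⊗ₜ[K] x) = Coalgebra.counit (R := K) x

/-- The multiplication `x ·_β y = β(x₁ ⊗ y₁) x₂y₂ β⁻¹(x₃ ⊗ y₃)` of the twisted
bialgebra `A^β`. -/
noncomputable def mulTwist (β βinv : (A ⊗[K] A) →ₗ[K] K) : (A ⊗[K] A) →ₗ[K] A :=
  conv2A (conv2A ((Algebra.linearMap K A) ∘ₗ β) (LinearMap.mul' K A))
    ((Algebra.linearMap K A) ∘ₗ βinv)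

end Defs

/-!
Precomposition with a coalgebra morphism is multiplicative for convolution, and the maps
`x ⊗ y ⊗ z ↦ ε(x) y ⊗ z, x ⊗ yz, ε(z) x ⊗ y, xy ⊗ z` are coalgebra morphisms. Writing
`σ₁, σ₂, σ₃, σ₄` for `σ` composed with them, the cocycle condition for `β` reads
`β₁β₂ = β₃β₄` in the convolution monoid of `A ⊗ A ⊗ A`; since the scalar factors of the twisted
product can be pulled out of `γ`, the one for `γ` on `A^β` reads
`γ₁(β₁γ₂β₁⁻¹) = γ₃(β₃γ₄β₃⁻¹)`. Substituting `β₂ = β₁⁻¹β₃β₄` turns `γ₁β₁γ₂β₂` into `γ₃β₃γ₄β₄`,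
the cocycle condition for `γ * β`. Unitality is preserved because `x ↦ x ⊗ 1` and `x ↦ 1 ⊗ x`
are coalgebra morphisms too, and `β⁻¹ * γ⁻¹` inverts `γ * β`.
-/

open Coalgebra WithConv

namespace CoalgHom

variable {R C D B : Type*} [CommSemiring R] [AddCommMonoid C] [Module R C] [Coalgebra R C]
  [AddCommMonoid D] [Module R D] [Coalgebra R D] [Semiring B] [Algebra R B]

noncomputable def compConv (φ : C →ₗc[R] D) : WithConv (D →ₗ[R] B) →* WithConv (C →ₗ[R] B) where
  toFun f := toConv (f.ofConv ∘ₗ φ.toLinearMap)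
  map_one' := by
    rw [LinearMap.convOne_def, LinearMap.convOne_def]
    simp [LinearMap.comp_assoc]
  map_mul' f g := congrArg toConv (LinearMap.convMul_comp_coalgHom_distrib f g φ)

@[simp] theorem compConv_apply (φ : C →ₗc[R] D) (f : WithConv (D →ₗ[R] B)) (c : C) :
    compConv φ f c = f (φ c) := rfl

end CoalgHom

namespace LinearMap

variable {R C B D : Type*} [CommSemiring R] [AddCommMonoid C] [Module R C] [Coalgebra R C]
  [Semiring B] [Algebra R B] [Semiring D] [Algebra R D]

theorem comp_algebraMap_convMul (f : B →ₗ[R] D) (l : C →ₗ[R] R) (g : C →ₗ[R] B) :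
    f ∘ₗ (toConv (Algebra.linearMap R B ∘ₗ l) * toConv g).ofConv =
      (toConv (Algebra.linearMap R D ∘ₗ l) * toConv (f ∘ₗ g)).ofConv := by
  ext c
  simp [(ℛ R c).convMul_apply, ← Algebra.smul_def]

theorem comp_convMul_algebraMap (f : B →ₗ[R] D) (l : C →ₗ[R] R) (g : C →ₗ[R] B) :
    f ∘ₗ (toConv g * toConv (Algebra.linearMap R B ∘ₗ l)).ofConv =
      (toConv (f ∘ₗ g) * toConv (Algebra.linearMap R D ∘ₗ l)).ofConv := by
  ext c
  simp [(ℛ R c).convMul_apply, ← Algebra.commutes, ← Algebra.smul_def]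

end LinearMap

theorem mul_mul_mul_eq_of_mul_conj_eq {M : Type*} [Monoid M]
    {g₁ g₂ g₃ g₄ b₁ b₂ b₃ b₄ b₁' b₃' : M} (h₁ : b₁' * b₁ = 1) (h₃ : b₃' * b₃ = 1)
    (hb : b₁ * b₂ = b₃ * b₄) (hg : g₁ * (b₁ * g₂ * b₁') = g₃ * (b₃ * g₄ * b₃')) :
    g₁ * b₁ * (g₂ * b₂) = g₃ * b₃ * (g₄ * b₄) := calc
  _ = g₁ * (b₁ * g₂ * b₁') * (b₁ * b₂) := by
    simp only [mul_assoc]; rw [← mul_assoc b₁' b₁, h₁, one_mul]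
  _ = g₃ * (b₃ * g₄ * b₃') * (b₃ * b₄) := by rw [hg, hb]
  _ = _ := by simp only [mul_assoc]; rw [← mul_assoc b₃' b₃, h₃, one_mul]

namespace Bialgebra

variable (K A) [CommRing K] [Ring A] [Bialgebra K A]

noncomputable def tmulOne : A →ₗc[K] A ⊗[K] A :=
  (CoalgHom.lTensor A (unitBialgHom K A).toCoalgHom).comp
    (Coalgebra.TensorProduct.rid K K A).symm.toCoalgHom

noncomputable def oneTmul : A →ₗc[K] A ⊗[K] A :=
  (CoalgHom.rTensor A (unitBialgHom K A).toCoalgHom).comp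
    (Coalgebra.TensorProduct.lid K A).symm.toCoalgHom

noncomputable def counitTensorId : A ⊗[K] (A ⊗[K] A) →ₗc[K] A ⊗[K] A :=
  (Coalgebra.TensorProduct.lid K (A ⊗[K] A)).toCoalgHom.comp
    (CoalgHom.rTensor (A ⊗[K] A) (counitCoalgHom K A))

noncomputable def idTensorMul : A ⊗[K] (A ⊗[K] A) →ₗc[K] A ⊗[K] A :=
  CoalgHom.lTensor A (mulCoalgHom K A)

noncomputable def idTensorCounit : A ⊗[K] (A ⊗[K] A) →ₗc[K] A ⊗[K] A :=
  CoalgHom.lTensor A ((Coalgebra.TensorProduct.rid K K A).toCoalgHom.comp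
    (CoalgHom.lTensor A (counitCoalgHom K A)))

noncomputable def mulTensorId : A ⊗[K] (A ⊗[K] A) →ₗc[K] A ⊗[K] A :=
  (CoalgHom.rTensor A (mulCoalgHom K A)).comp
    (Coalgebra.TensorProduct.assoc K K A A A).symm.toCoalgHom

variable {K A}

@[simp] theorem tmulOne_apply (x : A) : tmulOne K A x = x ⊗ₜ 1 :=
  congrArg (x ⊗ₜ ·) (map_one (unitBialgHom K A))

@[simp] theorem oneTmul_apply (x : A) : oneTmul K A x = 1 ⊗ₜ x :=
  congrArg (· ⊗ₜ x) (map_one (unitBialgHom K A))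

@[simp] theorem counitTensorId_tmul (x : A) (w : A ⊗[K] A) :
    counitTensorId K A (x ⊗ₜ w) = counit (R := K) x • w := rfl

@[simp] theorem idTensorCounit_tmul (x y z : A) :
    idTensorCounit K A (x ⊗ₜ (y ⊗ₜ z)) = counit (R := K) z • (x ⊗ₜ y) := by
  simp [idTensorCounit, TensorProduct.tmul_smul]

end Bialgebra

section Cocycle

variable [CommRing K] [Ring A] [Bialgebra K A]
open Bialgebra

theorem map_convOne_algebraMap_comp (b : A ⊗[K] A →ₗ[K] K) :
    TensorProduct.map (1 : WithConv (A →ₗ[K] A)).ofConv (Algebra.linearMap K A ∘ₗ b) =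
      Algebra.linearMap K (A ⊗[K] A) ∘ₗ (b ∘ₗ (counitTensorId K A).toLinearMap) := by
  ext x y z
  simp [Algebra.algebraMap_eq_smul_one, ← TensorProduct.smul_tmul', smul_smul, mul_comm,
    Algebra.TensorProduct.one_def]

theorem map_algebraMap_comp_convOne_comp_assoc_symm (b : A ⊗[K] A →ₗ[K] K) :
    TensorProduct.map (Algebra.linearMap K A ∘ₗ b) (1 : WithConv (A →ₗ[K] A)).ofConv ∘ₗ
        (Coalgebra.TensorProduct.assoc K K A A A).symm.toCoalgHom.toLinearMap =
      Algebra.linearMap K (A ⊗[K] A) ∘ₗ (b ∘ₗ (idTensorCounit K A).toLinearMap) := by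
  ext x y z
  simp [Algebra.algebraMap_eq_smul_one, ← TensorProduct.smul_tmul', smul_smul,
    Algebra.TensorProduct.one_def]

theorem comp_lTensor_algebraMap_convMul (σ b : A ⊗[K] A →ₗ[K] K) (v : A ⊗[K] A →ₗ[K] A) :
    toConv (σ ∘ₗ TensorProduct.map LinearMap.id
        (toConv (Algebra.linearMap K A ∘ₗ b) * toConv v).ofConv) =
      CoalgHom.compConv (counitTensorId K A) (toConv b) *
        toConv (σ ∘ₗ TensorProduct.map LinearMap.id v) := calc
  _ = toConv (σ ∘ₗ (toConv (TensorProduct.map (1 : WithConv (A →ₗ[K] A)).ofConv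
          (Algebra.linearMap K A ∘ₗ b)) * toConv (TensorProduct.map LinearMap.id v)).ofConv) := by
    rw [TensorProduct.map_convMul_map, one_mul]
  _ = _ := by rw [map_convOne_algebraMap_comp, LinearMap.comp_algebraMap_convMul]; rfl

theorem comp_lTensor_convMul_algebraMap (σ b : A ⊗[K] A →ₗ[K] K) (v : A ⊗[K] A →ₗ[K] A) :
    toConv (σ ∘ₗ TensorProduct.map LinearMap.id
        (toConv v * toConv (Algebra.linearMap K A ∘ₗ b)).ofConv) =
      toConv (σ ∘ₗ TensorProduct.map LinearMap.id v) *
        CoalgHom.compConv (counitTensorId K A) (toConv b) := calc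
  _ = toConv (σ ∘ₗ (toConv (TensorProduct.map LinearMap.id v) * toConv (TensorProduct.map
          (1 : WithConv (A →ₗ[K] A)).ofConv (Algebra.linearMap K A ∘ₗ b))).ofConv) := by
    rw [TensorProduct.map_convMul_map, mul_one]
  _ = _ := by rw [map_convOne_algebraMap_comp, LinearMap.comp_convMul_algebraMap]; rfl

theorem comp_rTensor_algebraMap_convMul (σ b : A ⊗[K] A →ₗ[K] K) (v : A ⊗[K] A →ₗ[K] A) :
    toConv ((σ ∘ₗ TensorProduct.map
        (toConv (Algebra.linearMap K A ∘ₗ b) * toConv v).ofConv LinearMap.id) ∘ₗ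
          (TensorProduct.assoc K A A A).symm.toLinearMap) =
      CoalgHom.compConv (idTensorCounit K A) (toConv b) *
        toConv ((σ ∘ₗ TensorProduct.map v LinearMap.id) ∘ₗ
          (TensorProduct.assoc K A A A).symm.toLinearMap) := calc
  _ = toConv (σ ∘ₗ (toConv (TensorProduct.map (Algebra.linearMap K A ∘ₗ b)
          (1 : WithConv (A →ₗ[K] A)).ofConv) * toConv (TensorProduct.map v LinearMap.id)).ofConv ∘ₗ
          (Coalgebra.TensorProduct.assoc K K A A A).symm.toCoalgHom.toLinearMap) := by
    rw [TensorProduct.map_convMul_map, one_mul]; rfl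
  _ = _ := by
    rw [LinearMap.convMul_comp_coalgHom_distrib, map_algebraMap_comp_convOne_comp_assoc_symm,
      LinearMap.comp_algebraMap_convMul]; rfl

theorem comp_rTensor_convMul_algebraMap (σ b : A ⊗[K] A →ₗ[K] K) (v : A ⊗[K] A →ₗ[K] A) :
    toConv ((σ ∘ₗ TensorProduct.map
        (toConv v * toConv (Algebra.linearMap K A ∘ₗ b)).ofConv LinearMap.id) ∘ₗ
          (TensorProduct.assoc K A A A).symm.toLinearMap) =
      toConv ((σ ∘ₗ TensorProduct.map v LinearMap.id) ∘ₗ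
          (TensorProduct.assoc K A A A).symm.toLinearMap) *
        CoalgHom.compConv (idTensorCounit K A) (toConv b) := calc
  _ = toConv (σ ∘ₗ (toConv (TensorProduct.map v LinearMap.id) *
          toConv (TensorProduct.map (Algebra.linearMap K A ∘ₗ b)
          (1 : WithConv (A →ₗ[K] A)).ofConv)).ofConv ∘ₗ
          (Coalgebra.TensorProduct.assoc K K A A A).symm.toCoalgHom.toLinearMap) := by
    rw [TensorProduct.map_convMul_map, mul_one]; rfl
  _ = _ := by
    rw [LinearMap.convMul_comp_coalgHom_distrib, map_algebraMap_comp_convOne_comp_assoc_symm,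
      LinearMap.comp_convMul_algebraMap]; rfl

theorem toConv_conv2 (f g : A ⊗[K] A →ₗ[K] K) : toConv (conv2 f g) = toConv f * toConv g := rfl

theorem toConv_conv3 (f g : A ⊗[K] (A ⊗[K] A) →ₗ[K] K) :
    toConv (conv3 f g) = toConv f * toConv g := rfl

theorem toConv_counit2 : toConv (counit2 : A ⊗[K] A →ₗ[K] K) = 1 := by
  ext x y
  simp [counit2, mul_comm]

theorem conv2_eq_counit2_iff (f g : A ⊗[K] A →ₗ[K] K) :
    conv2 f g = counit2 ↔ toConv f * toConv g = 1 := by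
  rw [← toConv_injective.eq_iff, toConv_conv2, toConv_counit2]

theorem isUnital_iff (σ : A ⊗[K] A →ₗ[K] K) :
    IsUnital σ ↔ CoalgHom.compConv (tmulOne K A) (toConv σ) = 1 ∧
      CoalgHom.compConv (oneTmul K A) (toConv σ) = 1 := by
  simp [IsUnital, WithConv.ext_iff, LinearMap.ext_iff, forall_and]

theorem isCocycleEq_iff (m : A ⊗[K] A →ₗ[K] A) (σ : A ⊗[K] A →ₗ[K] K) :
    IsCocycleEq m σ ↔
      CoalgHom.compConv (counitTensorId K A) (toConv σ) *
          toConv (σ ∘ₗ TensorProduct.map LinearMap.id m) =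
        CoalgHom.compConv (idTensorCounit K A) (toConv σ) *
          toConv ((σ ∘ₗ TensorProduct.map m LinearMap.id) ∘ₗ
            (TensorProduct.assoc K A A A).symm.toLinearMap) := by
  have hleft : toConv ((TensorProduct.lid K K).toLinearMap ∘ₗ
      TensorProduct.map Coalgebra.counit σ) =
      CoalgHom.compConv (counitTensorId K A) (toConv σ) := by
    ext x y z
    simp
  have hright : toConv (((TensorProduct.lid K K).toLinearMap ∘ₗ
      TensorProduct.map σ Coalgebra.counit) ∘ₗ (TensorProduct.assoc K A A A).symm.toLinearMap) =
      CoalgHom.compConv (idTensorCounit K A) (toConv σ) := by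
    ext x y z
    simp [mul_comm]
  rw [IsCocycleEq, ← toConv_injective.eq_iff, toConv_conv3, toConv_conv3, hleft, hright]

theorem isCocycleEq_mul'_iff (σ : A ⊗[K] A →ₗ[K] K) :
    IsCocycleEq (LinearMap.mul' K A) σ ↔
      CoalgHom.compConv (counitTensorId K A) (toConv σ) *
          CoalgHom.compConv (idTensorMul K A) (toConv σ) =
        CoalgHom.compConv (idTensorCounit K A) (toConv σ) *
          CoalgHom.compConv (mulTensorId K A) (toConv σ) :=
  isCocycleEq_iff _ σ

theorem mulTwist_eq_convMul (β βinv : A ⊗[K] A →ₗ[K] K) :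
    mulTwist β βinv = (toConv (Algebra.linearMap K A ∘ₗ β) * toConv (LinearMap.mul' K A) *
      toConv (Algebra.linearMap K A ∘ₗ βinv)).ofConv := rfl

theorem isCocycleEq_mulTwist_iff (β βinv σ : A ⊗[K] A →ₗ[K] K) :
    IsCocycleEq (mulTwist β βinv) σ ↔
      CoalgHom.compConv (counitTensorId K A) (toConv σ) *
          (CoalgHom.compConv (counitTensorId K A) (toConv β) *
            CoalgHom.compConv (idTensorMul K A) (toConv σ) *
              CoalgHom.compConv (counitTensorId K A) (toConv βinv)) =
        CoalgHom.compConv (idTensorCounit K A) (toConv σ) *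
          (CoalgHom.compConv (idTensorCounit K A) (toConv β) *
            CoalgHom.compConv (mulTensorId K A) (toConv σ) *
              CoalgHom.compConv (idTensorCounit K A) (toConv βinv)) := by
  rw [isCocycleEq_iff, mulTwist_eq_convMul, comp_lTensor_convMul_algebraMap,
    comp_lTensor_algebraMap_convMul, comp_rTensor_convMul_algebraMap,
    comp_rTensor_algebraMap_convMul]
  rfl

end Cocycle

/-- if `β` is a unital 2-cocycle for `A` and `γ` is a unital 2-cocycle
for the twisted bialgebra `A^β`, then `γ * β` is a unital 2-cocycle for `A`. -/
theorem conv_cocycle [CommRing K] [Ring A] [Bialgebra K A]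
    (β βinv γ γinv : (A ⊗[K] A) →ₗ[K] K)
    (hβ₁ : conv2 β βinv = counit2) (hβ₂ : conv2 βinv β = counit2)
    (hβc : IsCocycleEq (LinearMap.mul' K A) β) (hβu : IsUnital β)
    (hγ₁ : conv2 γ γinv = counit2) (hγ₂ : conv2 γinv γ = counit2)
    (hγc : IsCocycleEq (mulTwist β βinv) γ) (hγu : IsUnital γ) :
    IsCocycleEq (LinearMap.mul' K A) (conv2 γ β) ∧ IsUnital (conv2 γ β) ∧
      ∃ δ : (A ⊗[K] A) →ₗ[K] K,
        conv2 (conv2 γ β) δ = counit2 ∧ conv2 δ (conv2 γ β) = counit2 := by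
  rw [conv2_eq_counit2_iff] at hβ₁ hβ₂ hγ₁ hγ₂
  have hβinv_β (φ : A ⊗[K] (A ⊗[K] A) →ₗc[K] A ⊗[K] A) :
      CoalgHom.compConv φ (toConv βinv) * CoalgHom.compConv φ (toConv β) = 1 := by
    rw [← map_mul, hβ₂, map_one]
  refine ⟨?_, ?_, conv2 βinv γinv, ?_, ?_⟩
  · rw [isCocycleEq_mul'_iff] at hβc ⊢
    rw [isCocycleEq_mulTwist_iff] at hγc
    simp only [toConv_conv2, map_mul]
    exact mul_mul_mul_eq_of_mul_conj_eq (hβinv_β _) (hβinv_β _) hβc hγc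
  · rw [isUnital_iff] at hβu hγu ⊢
    simp only [toConv_conv2, map_mul, hβu, hγu, mul_one, and_self]
  · rw [conv2_eq_counit2_iff, toConv_conv2, toConv_conv2, mul_assoc,
      ← mul_assoc (toConv β), hβ₁, one_mul, hγ₁]
  · rw [conv2_eq_counit2_iff, toConv_conv2, toConv_conv2, mul_assoc,
      ← mul_assoc (toConv γinv), hγ₂, one_mul, hβ₂]
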